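/- Let $\lambda > 0$, $-1 < \beta < 2$, $\zeta = +1$, and $0 < \sigma < \frac{2-\beta}{1+\beta}$. Suppose the Gagliardo–Nirenberg-type inequality $\|g\|_{L^{2\sigma+2}}^{2\sigma+2} \le C^{2\sigma+2} F(g)^{\frac{\sigma}{2}+1-\frac{(\sigma+1)\beta}{2}} \|D^{1-\beta/2}g\|_{L^2}^{(\sigma+1)\beta+\sigma}$ holds with constant $C > 0$, and let $u : [0,T) \to \mathscr{X}$ conserve the mass $F$ and the energy $E(u) = \frac{1}{2}\lambda\|D^{1-\beta/2}u\|_{L^2}^2 - \frac{1}{2(\sigma+1)}\|u\|_{L^{2\sigma+2}}^{2\sigma+2}$. Then $\sup_{t\in[0,T)} \|D^{1-\beta/2}u(t)\|_{L^2} < \infty$. -/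

import Mathlib

open MeasureTheory

/-- Fourier multiplier with symbol `|ξ|^γ`. -/
noncomputable def Dop (γ : ℝ) (f : ℝ → ℂ) : ℝ → ℂ :=
  fun x => (FourierTransformInv.fourierInv
    (fun ξ : ℝ => ((|ξ| ^ γ : ℝ) : ℂ) * (FourierTransform.fourier f : ℝ → ℂ) ξ) : ℝ → ℂ) x

/-- squared L² norm -/
noncomputable def L2sq (f : ℝ → ℂ) : ℝ := ∫ x : ℝ, ‖f x‖ ^ 2

/-- the quantity `∫ |f|^q` (the `L^q` norm raised to the power `q`) -/
noncomputable def Lpow (q : ℝ) (f : ℝ → ℂ) : ℝ := ∫ x : ℝ, ‖f x‖ ^ q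
/-!
Multiplying the energy identity by `2` and bounding the potential term by the
Gagliardo–Nirenberg inequality, with the mass fixed at its initial value, gives
`λ φ(t) ≤ 2 E(u₀) + b φ(t)^θ` for `φ(t) = ‖D^{1-β/2}u(t)‖²`, a constant `b`, and
`θ = ((σ+1)β+σ)/2`. Mass-subcriticality `σ < (2-β)/(1+β)` is exactly `θ < 1`, and a
sublinear power cannot keep up with `λ φ`, so `φ` stays bounded.
-/

open Filter Topology

lemma eventually_add_mul_rpow_lt_mul {lam θ : ℝ} (a b : ℝ) (hlam : 0 < lam) (hθ : θ < 1) :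
    ∀ᶠ x in atTop, a + b * x ^ θ < lam * x := by
  have hdecay : Tendsto (fun x : ℝ => a * x⁻¹ + b * x ^ (θ - 1)) atTop (𝓝 0) := by
    have hpow : Tendsto (fun x : ℝ => x ^ (θ - 1)) atTop (𝓝 0) := by
      simpa using tendsto_rpow_neg_atTop (by linarith : 0 < 1 - θ)
    simpa using (tendsto_inv_atTop_zero.const_mul a).add (hpow.const_mul b)
  filter_upwards [hdecay.eventually (gt_mem_nhds hlam), eventually_gt_atTop 0] with x hx hxpos
  calc a + b * x ^ θ = (a * x⁻¹ + b * x ^ (θ - 1)) * x := by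
        rw [add_mul, mul_assoc, mul_assoc, inv_mul_cancel₀ hxpos.ne', Real.rpow_sub_one hxpos.ne',
          div_mul_cancel₀ _ hxpos.ne', mul_one]
    _ < lam * x := mul_lt_mul_of_pos_right hx hxpos

lemma exists_le_of_mul_le_add_mul_rpow {lam θ : ℝ} (a b : ℝ) (hlam : 0 < lam) (hθ : θ < 1) :
    ∃ M, ∀ x, lam * x ≤ a + b * x ^ θ → x ≤ M := by
  obtain ⟨M, hM⟩ := eventually_atTop.1 (eventually_add_mul_rpow_lt_mul a b hlam hθ)
  exact ⟨M, fun x hx => le_of_not_ge fun hMx => (hM x hMx).not_ge hx⟩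

lemma gagliardoNirenberg_exponent_lt_one {σ β : ℝ} (hβ : -1 < β) (hσ : σ < (2 - β) / (1 + β)) :
    ((σ + 1) * β + σ) / 2 < 1 := by
  rw [lt_div_iff₀ (by linarith)] at hσ
  linarith

theorem stmt_16_general (lam σ β T C : ℝ) (hlam : 0 < lam)
    (hβ₁ : -1 < β) (hσ : 0 < σ) (hσsub : σ < (2 - β) / (1 + β))
    (u : ℝ → ℝ → ℂ)
    (E F : ℝ → ℝ)
    (hE : ∀ t, E t = (1 / 2) * lam * L2sq (Dop (1 - β / 2) (fun x => u x t)) -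
      (1 / (2 * (σ + 1))) * Lpow (2 * σ + 2) (fun x => u x t))
    (hGN : ∀ t, 0 ≤ t → t < T →
      Lpow (2 * σ + 2) (fun x => u x t) ≤
        C ^ (2 * σ + 2) * (F t) ^ (σ / 2 + 1 - (σ + 1) * β / 2) *
          (L2sq (Dop (1 - β / 2) (fun x => u x t))) ^ (((σ + 1) * β + σ) / 2))
    (hEcons : ∀ t, 0 ≤ t → t < T → E t = E 0)
    (hFcons : ∀ t, 0 ≤ t → t < T → F t = F 0) :
    ∃ M : ℝ, ∀ t, 0 ≤ t → t < T →
      L2sq (Dop (1 - β / 2) (fun x => u x t)) ≤ M := by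
  obtain ⟨M, hM⟩ := exists_le_of_mul_le_add_mul_rpow (2 * E 0)
    (C ^ (2 * σ + 2) * F 0 ^ (σ / 2 + 1 - (σ + 1) * β / 2) / (σ + 1)) hlam
    (gagliardoNirenberg_exponent_lt_one hβ₁ hσsub)
  refine ⟨M, fun t ht htT => hM _ ?_⟩
  have hσ₁ : 0 < σ + 1 := by linarith
  have henergy : lam * L2sq (Dop (1 - β / 2) (fun x => u x t)) =
      2 * E 0 + Lpow (2 * σ + 2) (fun x => u x t) / (σ + 1) := by
    rw [← hEcons t ht htT, hE t]
    field_simp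
    ring
  have hpotential := div_le_div_of_nonneg_right (hGN t ht htT) hσ₁.le
  rw [hFcons t ht htT] at hpotential
  rw [henergy, div_mul_eq_mul_div]
  gcongr

/-- In the focusing mass-subcritical case `σ < (2-β)/(1+β)`, the Gagliardo–Nirenberg
inequality plus mass and energy conservation yield a uniform bound on
`‖D^{1-β/2}u(t)‖_{L²}`. -/
theorem stmt_16 (lam σ β T C : ℝ) (hlam : 0 < lam)
    (hβ₁ : -1 < β) (hβ₂ : β < 2) (hσ : 0 < σ) (hσsub : σ < (2 - β) / (1 + β))
    (hC : 0 < C) (hT : 0 < T)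
    (u : ℝ → ℝ → ℂ)
    (E F : ℝ → ℝ)
    (hE : ∀ t, E t = (1 / 2) * lam * L2sq (Dop (1 - β / 2) (fun x => u x t)) -
      (1 / (2 * (σ + 1))) * Lpow (2 * σ + 2) (fun x => u x t))
    (hF : ∀ t, F t = L2sq (Dop (-β / 2) (fun x => u x t)))
    (hFnonneg : ∀ t, 0 ≤ F t)
    (hGN : ∀ t, 0 ≤ t → t < T →
      Lpow (2 * σ + 2) (fun x => u x t) ≤
        C ^ (2 * σ + 2) * (F t) ^ (σ / 2 + 1 - (σ + 1) * β / 2) *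
          (L2sq (Dop (1 - β / 2) (fun x => u x t))) ^ (((σ + 1) * β + σ) / 2))
    (hL2nonneg : ∀ t, 0 ≤ L2sq (Dop (1 - β / 2) (fun x => u x t)))
    (hEcons : ∀ t, 0 ≤ t → t < T → E t = E 0)
    (hFcons : ∀ t, 0 ≤ t → t < T → F t = F 0) :
    ∃ M : ℝ, ∀ t, 0 ≤ t → t < T →
      L2sq (Dop (1 - β / 2) (fun x => u x t)) ≤ M :=
  stmt_16_general lam σ β T C hlam hβ₁ hσ hσsub u E F hE hGN hEcons hFcons
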